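/- arXiv:2004.04719 — 4 statements merged into one kernel-verified Lean document; each statement's English description precedes it below -/
import Mathlib

section
/- For any Hurwitz matrix A ∈ ℝ^{d×d} (i.e., every eigenvalue of A has strictly positive real part), there exists an invertible matrix U ∈ ℂ^{d×d} and a matrix D ∈ ℂ^{d×d} such that A = U D U⁻¹ and D + Dᴴ ⪰ λ* I_d, where λ* = min_i Re(λ_i(A)) and Dᴴ denotes the conjugate transpose. -/
/-!
Induction on the dimension, as in Schur triangularization. Conjugating by a matrix whose column
is an eigenvector for an eigenvalue `μ` puts `A` in the block form `[[X, 0], [w, μ]]`, and by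
induction `X = V D' V⁻¹` with `D' + D'ᴴ ⪰ r'` for some `r' > r`. Conjugating further by
`diag(V, ε⁻¹)` gives `D = [[D', 0], [ε u, μ]]` with `u = w V`, and the Schur complement of the
positive corner `a = 2 Re μ - r` in `D + Dᴴ - r` is
`(D' + D'ᴴ - r') + ((r' - r) - ε² uᴴ u / a) ⪰ 0` once `ε² ‖u‖² ≤ a (r' - r)`.
The spectrum being finite, the strict bound `r < 2 Re μ` on all eigenvalues leaves room for the
slack `r' - r` at every step; for a Hurwitz matrix it holds with `r = λ*`.
-/

open Matrix
open scoped ComplexOrder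

theorem exists_pos_sq_mul_le (t : ℝ) {b : ℝ} (hb : 0 < b) :
    ∃ ε : ℝ, 0 < ε ∧ ε ^ 2 * t ≤ b := by
  refine ⟨√(b / (|t| + 1)), by positivity, ?_⟩
  rw [Real.sq_sqrt (by positivity), div_mul_eq_mul_div, div_le_iff₀ (by positivity)]
  nlinarith [le_abs_self t]

namespace Matrix

theorem norm_dotProduct_sq_le {n 𝕜 : Type*} [Fintype n] [RCLike 𝕜] (v w : n → 𝕜) :
    ‖v ⬝ᵥ w‖ ^ 2 ≤ (∑ j, ‖v j‖ ^ 2) * ∑ j, ‖w j‖ ^ 2 := by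
  have h := norm_inner_le_norm (𝕜 := 𝕜) (WithLp.toLp 2 (star w)) (WithLp.toLp 2 v)
  rw [EuclideanSpace.inner_toLp_toLp, star_star] at h
  calc ‖v ⬝ᵥ w‖ ^ 2 ≤ (‖WithLp.toLp 2 (star w)‖ * ‖WithLp.toLp 2 v‖) ^ 2 := by gcongr
    _ = (∑ j, ‖v j‖ ^ 2) * ∑ j, ‖w j‖ ^ 2 := by
      simp [mul_pow, EuclideanSpace.norm_sq_eq, mul_comm]

section Spectrum

variable {n m K : Type*} [Fintype n] [DecidableEq n] [Fintype m] [DecidableEq m] [Field K]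

theorem spectrum_fromBlocks_zero₁₂ (A : Matrix n n K) (C : Matrix m n K) (D : Matrix m m K) :
    spectrum K (fromBlocks A 0 C D) = spectrum K A ∪ spectrum K D := by
  ext μ
  simp only [Set.mem_union, mem_spectrum_iff_isRoot_charpoly, charpoly_fromBlocks_zero₁₂,
    Polynomial.root_mul]

theorem spectrum_submatrix_equiv (e : m ≃ n) (A : Matrix n n K) :
    spectrum K (A.submatrix e e) = spectrum K A := by
  ext μ
  rw [mem_spectrum_iff_isRoot_charpoly, mem_spectrum_iff_isRoot_charpoly,
    ← charpoly_reindex e.symm A, reindex_apply, Equiv.symm_symm]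

theorem spectrum_nonsing_inv_mul_mul {P : Matrix n n K} (hP : IsUnit P) (A : Matrix n n K) :
    spectrum K (P⁻¹ * A * P) = spectrum K A := by
  obtain ⟨P, rfl⟩ := hP
  rw [← coe_units_inv]
  exact spectrum.units_conjugate'

end Spectrum

section Triangularization

variable {n K : Type*} [Field K]

theorem submatrix_eq_fromBlocks_of_mulVec_single {m : Type*} [Fintype m] [DecidableEq m]
    {C : Matrix m m K} {μ : K} (e : n ⊕ Unit ≃ m)
    (hC : C *ᵥ Pi.single (e (.inr ())) 1 = μ • Pi.single (e (.inr ())) 1) :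
    C.submatrix e e =
      fromBlocks (C.submatrix e e).toBlocks₁₁ 0 (C.submatrix e e).toBlocks₂₁ (μ • 1) := by
  have hcol : ∀ j, C j (e (.inr ())) = μ * (Pi.single (e (.inr ())) 1 : m → K) j := fun j => by
    simpa [mulVec_single] using congrFun hC j
  conv_lhs => rw [← fromBlocks_toBlocks (C.submatrix e e)]
  congr 1
  · ext j k
    simp [toBlocks₁₂, hcol]
  · ext j k
    simp [toBlocks₂₂, hcol]

variable [DecidableEq n]

def sumUnitEquivOfNe (i : n) : {j // j ≠ i} ⊕ Unit ≃ n :=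
  (Equiv.optionEquivSumPUnit _).symm.trans (Equiv.optionSubtypeNe i)

@[simp] theorem sumUnitEquivOfNe_inr (i : n) : sumUnitEquivOfNe i (.inr ()) = i := by
  simp [sumUnitEquivOfNe]

variable [Fintype n]

theorem exists_isUnit_conj_mulVec_single {A : Matrix n n K} {v : n → K} {μ : K} {i : n}
    (hv : A *ᵥ v = μ • v) (hi : v i ≠ 0) :
    ∃ P : Matrix n n K, IsUnit P ∧ (P⁻¹ * A * P) *ᵥ Pi.single i 1 = μ • Pi.single i 1 := by
  set P := (1 : Matrix n n K).updateCol i v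
  have hP : IsUnit P := by
    rw [isUnit_iff_isUnit_det, ← cramer_apply, cramer_one]
    exact hi.isUnit
  have hPi : P *ᵥ Pi.single i 1 = v := by
    ext j
    simp [P, mulVec_single]
  refine ⟨P, hP, ?_⟩
  rw [← mulVec_mulVec, ← mulVec_mulVec, hPi, hv, mulVec_smul, ← hPi, mulVec_mulVec,
    nonsing_inv_mul _ ((isUnit_iff_isUnit_det P).mp hP), one_mulVec]

theorem exists_isUnit_conj_submatrix_eq_fromBlocks {A : Matrix n n K} {μ : K}
    (hμ : μ ∈ spectrum K A) : ∃ i : n, ∃ P : Matrix n n K, IsUnit P ∧ ∃ X w,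
      (P⁻¹ * A * P).submatrix (sumUnitEquivOfNe i) (sumUnitEquivOfNe i) =
        fromBlocks X 0 w (μ • 1) := by
  rw [← spectrum_toLin', ← Module.End.hasEigenvalue_iff_mem_spectrum] at hμ
  obtain ⟨v, hv⟩ := hμ.exists_hasEigenvector
  obtain ⟨i, hi⟩ := Function.ne_iff.mp hv.2
  obtain ⟨P, hP, hcol⟩ := exists_isUnit_conj_mulVec_single (by simpa using hv.apply_eq_smul) hi
  exact ⟨i, P, hP, _, _, submatrix_eq_fromBlocks_of_mulVec_single _ (by simpa using hcol)⟩

end Triangularization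

section PosSemidef

variable {n : Type*} [Fintype n] [DecidableEq n]

theorem posSemidef_smul_one_sub_conjTranspose_mul_self (u : Matrix Unit n ℂ) {s : ℝ}
    (h : ∑ j, ‖u () j‖ ^ 2 ≤ s) : ((s : ℂ) • (1 : Matrix n n ℂ) - uᴴ * u).PosSemidef := by
  refine posSemidef_iff_dotProduct_mulVec.mpr ⟨?_, fun x => ?_⟩
  · simp [IsHermitian, conjTranspose_sub, conjTranspose_smul]
  have hx : star x ⬝ᵥ x = ((∑ j, ‖x j‖ ^ 2 : ℝ) : ℂ) := by
    simp [dotProduct, ← Complex.conj_mul']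
  have hu : star x ⬝ᵥ (uᴴ * u) *ᵥ x = ((‖u () ⬝ᵥ x‖ ^ 2 : ℝ) : ℂ) := by
    rw [← mulVec_mulVec, dotProduct_mulVec, vecMul_conjTranspose, star_star]
    simp [dotProduct, mulVec, ← Complex.conj_mul']
  rw [sub_mulVec, dotProduct_sub, smul_mulVec, one_mulVec, dotProduct_smul, smul_eq_mul, hx, hu,
    ← Complex.ofReal_mul, ← Complex.ofReal_sub, Complex.zero_le_real, sub_nonneg]
  calc ‖u () ⬝ᵥ x‖ ^ 2 ≤ (∑ j, ‖u () j‖ ^ 2) * ∑ j, ‖x j‖ ^ 2 := norm_dotProduct_sq_le _ _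
    _ ≤ s * ∑ j, ‖x j‖ ^ 2 := by gcongr

theorem posSemidef_fromBlocks_smul_one (H : Matrix n n ℂ) (y : Matrix Unit n ℂ) {a s : ℝ}
    (ha : 0 < a) (hH : (H - (s : ℂ) • (1 : Matrix n n ℂ)).PosSemidef)
    (hy : ∑ j, ‖y () j‖ ^ 2 ≤ a * s) :
    (fromBlocks H yᴴ y ((a : ℂ) • (1 : Matrix Unit Unit ℂ))).PosSemidef := by
  have ha' : (a : ℂ) ≠ 0 := by exact_mod_cast ha.ne'
  have hpd : ((a : ℂ) • (1 : Matrix Unit Unit ℂ)).PosDef :=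
    PosDef.one.smul (by exact_mod_cast ha)
  have hinv : ((a : ℂ) • (1 : Matrix Unit Unit ℂ))⁻¹ = (a : ℂ)⁻¹ • 1 :=
    inv_eq_left_inv (by rw [smul_mul_smul_comm, inv_mul_cancel₀ ha', Matrix.mul_one, one_smul])
  let _ := hpd.isUnit.invertible
  have hschur := PosDef.fromBlocks₂₂ H yᴴ hpd
  rw [conjTranspose_conjTranspose] at hschur
  have hsplit : H - yᴴ * ((a : ℂ) • (1 : Matrix Unit Unit ℂ))⁻¹ * y
      = (H - (s : ℂ) • 1) + (a : ℂ)⁻¹ • (((a * s : ℝ) : ℂ) • 1 - yᴴ * y) := by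
    rw [hinv, Matrix.mul_smul, Matrix.mul_one, Matrix.smul_mul, smul_sub, smul_smul,
      Complex.ofReal_mul, inv_mul_cancel_left₀ ha']
    abel
  rw [hschur, hsplit]
  exact hH.add ((posSemidef_smul_one_sub_conjTranspose_mul_self y hy).smul
    (by simpa using ha.le))

end PosSemidef

theorem fromBlocks_add_conjTranspose_sub_smul_one {n : Type*} [DecidableEq n] (D : Matrix n n ℂ)
    (y : Matrix Unit n ℂ) (μ : ℂ) (r : ℝ) :
    fromBlocks D 0 y (μ • 1) + (fromBlocks D 0 y (μ • 1))ᴴ - (r : ℂ) • 1 =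
      fromBlocks (D + Dᴴ - (r : ℂ) • 1) yᴴ y (((2 * μ.re - r : ℝ) : ℂ) • 1) := by
  rw [fromBlocks_conjTranspose, ← fromBlocks_one, fromBlocks_smul, fromBlocks_add,
    sub_eq_add_neg, fromBlocks_neg, fromBlocks_add, ← sub_eq_add_neg]
  congr 1
  · simp
  · simp
  · rw [← sub_eq_add_neg, conjTranspose_smul, conjTranspose_one, ← add_smul, ← sub_smul,
      RCLike.star_def, Complex.add_conj]
    push_cast
    ring_nf

variable {n m : Type*} [Fintype n] [DecidableEq n] [Fintype m] [DecidableEq m]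

def IsSimilarToAddConjTransposeGE (A : Matrix n n ℂ) (r : ℝ) : Prop :=
  ∃ U D : Matrix n n ℂ, IsUnit U ∧ A = U * D * U⁻¹ ∧
    (D + Dᴴ - (r : ℂ) • (1 : Matrix n n ℂ)).PosSemidef

namespace IsSimilarToAddConjTransposeGE

variable {A : Matrix n n ℂ} {r : ℝ}

theorem of_mul_eq_mul {U D : Matrix n n ℂ} (hU : IsUnit U) (hAU : A * U = U * D)
    (hD : (D + Dᴴ - (r : ℂ) • (1 : Matrix n n ℂ)).PosSemidef) :
    IsSimilarToAddConjTransposeGE A r := by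
  refine ⟨U, D, hU, ?_, hD⟩
  rw [← hAU, Matrix.mul_assoc, mul_nonsing_inv _ ((isUnit_iff_isUnit_det U).mp hU),
    Matrix.mul_one]

theorem of_conj {P : Matrix n n ℂ} (hP : IsUnit P)
    (h : IsSimilarToAddConjTransposeGE (P⁻¹ * A * P) r) :
    IsSimilarToAddConjTransposeGE A r := by
  obtain ⟨U, D, hU, hEq, hD⟩ := h
  refine of_mul_eq_mul (hP.mul hU) ?_ hD
  have hPd := (isUnit_iff_isUnit_det P).mp hP
  have hUd := (isUnit_iff_isUnit_det U).mp hU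
  calc A * (P * U) = P * (P⁻¹ * A * P) * U := by
        simp only [Matrix.mul_assoc, mul_nonsing_inv_cancel_left _ _ hPd]
    _ = P * U * D := by
        rw [hEq]; simp only [Matrix.mul_assoc, nonsing_inv_mul_cancel_right _ _ hUd]

theorem of_submatrix (e : m ≃ n) (h : IsSimilarToAddConjTransposeGE (A.submatrix e e) r) :
    IsSimilarToAddConjTransposeGE A r := by
  obtain ⟨U, D, hU, hEq, hD⟩ := h
  refine of_mul_eq_mul (U := U.submatrix e.symm e.symm) (D := D.submatrix e.symm e.symm)
    ((isUnit_submatrix_equiv e.symm e.symm).mpr hU) ?_ ?_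
  · have hAU : A.submatrix e e * U = U * D := by
      rw [hEq, nonsing_inv_mul_cancel_right _ _ ((isUnit_iff_isUnit_det U).mp hU)]
    calc A * U.submatrix e.symm e.symm
        = (A.submatrix e e).submatrix e.symm e.symm * U.submatrix e.symm e.symm := by simp
      _ = (U * D).submatrix e.symm e.symm := by rw [submatrix_mul_equiv, hAU]
      _ = U.submatrix e.symm e.symm * D.submatrix e.symm e.symm := (submatrix_mul_equiv ..).symm
  · simpa [submatrix_add, submatrix_sub, submatrix_smul, conjTranspose_submatrix,
      submatrix_one_equiv] using hD.submatrix e.symm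

theorem fromBlocks_zero₁₂ {X : Matrix n n ℂ} (w : Matrix Unit n ℂ) {μ : ℂ} {r' : ℝ}
    (hr : r < r') (hμ : r < 2 * μ.re) (hX : IsSimilarToAddConjTransposeGE X r') :
    IsSimilarToAddConjTransposeGE (fromBlocks X 0 w (μ • 1)) r := by
  obtain ⟨V, D, hV, rfl, hD⟩ := hX
  set u := w * V
  set a := 2 * μ.re - r
  have ha : 0 < a := by linarith
  obtain ⟨ε, hε, hεu⟩ := exists_pos_sq_mul_le (∑ j, ‖u () j‖ ^ 2) (mul_pos ha (sub_pos.mpr hr))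
  have hε' : (ε : ℂ) ≠ 0 := by exact_mod_cast hε.ne'
  refine of_mul_eq_mul (U := fromBlocks V 0 0 ((ε : ℂ)⁻¹ • 1))
    (D := fromBlocks D 0 ((ε : ℂ) • u) (μ • 1)) ?_ ?_ ?_
  · refine isUnit_fromBlocks_zero₁₂.mpr ⟨hV, ?_⟩
    simpa only [Algebra.algebraMap_eq_smul_one] using
      (inv_ne_zero hε').isUnit.map (algebraMap ℂ (Matrix Unit Unit ℂ))
  · have hVV := nonsing_inv_mul V ((isUnit_iff_isUnit_det V).mp hV)
    simp only [fromBlocks_multiply, Matrix.mul_zero, Matrix.zero_mul, add_zero, zero_add,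
      Matrix.mul_assoc, hVV, Matrix.mul_one]
    congr 1
    · rw [Matrix.smul_mul, Matrix.one_mul, smul_smul, inv_mul_cancel₀ hε', one_smul]
    · rw [smul_mul_smul_comm, smul_mul_smul_comm, mul_comm]
  · rw [fromBlocks_add_conjTranspose_sub_smul_one]
    refine posSemidef_fromBlocks_smul_one (s := r' - r) _ _ ha ?_ ?_
    · convert hD using 1
      push_cast
      rw [sub_smul, sub_sub, add_sub_cancel]
    · simpa only [smul_apply, smul_eq_mul, norm_mul, Complex.norm_real, Real.norm_eq_abs, mul_pow,
        sq_abs, ← Finset.mul_sum] using hεu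

end IsSimilarToAddConjTransposeGE

open IsSimilarToAddConjTransposeGE in
theorem isSimilarToAddConjTransposeGE_of_le_re (A : Matrix n n ℂ) {c r : ℝ} (hr : r < 2 * c)
    (hc : ∀ μ ∈ spectrum ℂ A, c ≤ μ.re) : IsSimilarToAddConjTransposeGE A r := by
  induction h : Fintype.card n generalizing n r with
  | zero =>
    have : IsEmpty n := Fintype.card_eq_zero_iff.mp h
    refine of_mul_eq_mul (D := A) isUnit_one (by simp) ?_
    rw [Subsingleton.elim (A + Aᴴ - (r : ℂ) • 1) 0]
    exact PosSemidef.zero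
  | succ d ih =>
    have : Nonempty n := Fintype.card_pos_iff.mp (by omega)
    obtain ⟨μ, hμ⟩ := spectrum.nonempty_of_isAlgClosed_of_finiteDimensional ℂ A
    obtain ⟨i, P, hP, X, w, hX⟩ := exists_isUnit_conj_submatrix_eq_fromBlocks hμ
    have hspecX : spectrum ℂ X ⊆ spectrum ℂ A := by
      rw [← spectrum_nonsing_inv_mul_mul hP A, ← spectrum_submatrix_equiv (sumUnitEquivOfNe i), hX,
        spectrum_fromBlocks_zero₁₂]
      exact Set.subset_union_left
    have hcardX : Fintype.card {j // j ≠ i} = d := by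
      have := Fintype.card_congr (sumUnitEquivOfNe i)
      rw [Fintype.card_sum, Fintype.card_unit, h] at this
      omega
    have hXsim := ih X (r := (r + 2 * c) / 2) (by linarith) (fun ν hν => hc ν (hspecX hν)) hcardX
    refine of_conj hP (of_submatrix (sumUnitEquivOfNe i) ?_)
    rw [hX]
    exact hXsim.fromBlocks_zero₁₂ w (by linarith) (by linarith [hc μ hμ])

theorem isSimilarToAddConjTransposeGE_of_lt_two_mul_re (A : Matrix n n ℂ) {r : ℝ}
    (h : ∀ μ ∈ spectrum ℂ A, r < 2 * μ.re) : IsSimilarToAddConjTransposeGE A r := by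
  -- the extra point `r / 2 + 1` only keeps the set nonempty when `n` is empty
  obtain ⟨z, hz, hmin⟩ := Set.exists_min_image (insert ((r / 2 + 1 : ℝ) : ℂ) (spectrum ℂ A))
    Complex.re ((finite_spectrum A).insert _) (Set.insert_nonempty _ _)
  refine isSimilarToAddConjTransposeGE_of_le_re A (c := z.re) ?_
    (fun μ hμ => hmin μ (Set.mem_insert_of_mem _ hμ))
  rcases hz with rfl | hz
  · simp only [Complex.ofReal_re]
    linarith
  · exact h z hz

end Matrix

theorem stmt0_general {d : ℕ} (A : Matrix (Fin d) (Fin d) ℝ) (lamStar : ℝ)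
    (hmin : ∀ μ ∈ spectrum ℂ (A.map (algebraMap ℝ ℂ)), lamStar ≤ μ.re)
    (hHurwitz : ∀ μ ∈ spectrum ℂ (A.map (algebraMap ℝ ℂ)), 0 < μ.re) :
    ∃ U D : Matrix (Fin d) (Fin d) ℂ, IsUnit U ∧
      A.map (algebraMap ℝ ℂ) = U * D * U⁻¹ ∧
      (D + Dᴴ - (lamStar : ℂ) • (1 : Matrix (Fin d) (Fin d) ℂ)).PosSemidef :=
  isSimilarToAddConjTransposeGE_of_lt_two_mul_re _ fun μ hμ => by
    linarith [hmin μ hμ, hHurwitz μ hμ]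

/-- For any Hurwitz matrix `A`, there exist an invertible `U` and a matrix `D` over `ℂ`
with `A = U D U⁻¹` and `D + Dᴴ ⪰ λ* I`, where `λ*` is the minimal real part of the
eigenvalues of `A`. -/
theorem stmt0 {d : ℕ} (A : Matrix (Fin d) (Fin d) ℝ) (lamStar : ℝ)
    (hmem : ∃ μ ∈ spectrum ℂ (A.map (algebraMap ℝ ℂ)), μ.re = lamStar)
    (hmin : ∀ μ ∈ spectrum ℂ (A.map (algebraMap ℝ ℂ)), lamStar ≤ μ.re)
    (hHurwitz : ∀ μ ∈ spectrum ℂ (A.map (algebraMap ℝ ℂ)), 0 < μ.re) :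
    ∃ U D : Matrix (Fin d) (Fin d) ℂ, IsUnit U ∧
      A.map (algebraMap ℝ ℂ) = U * D * U⁻¹ ∧
      (D + Dᴴ - (lamStar : ℂ) • (1 : Matrix (Fin d) (Fin d) ℂ)).PosSemidef :=
  stmt0_general A lamStar hmin hHurwitz
end

section
/- For all real A > 0, z > −A, and α ∈ (0, 1), it holds that (A + z)^{1+α} ≤ A^{1+α} + (1+α) A^α z + |z|^{1+α}. -/
/-!
With `p = 1 + α`, the gap `A^p + p A^α z + |z|^p - (A + z)^p` vanishes at `z = 0`. Its derivative
in `z` is `p (A^α + z^α - (A + z)^α)` for `z > 0` and, writing `z = -w`, the derivative in `w` is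
`p (w^α + (A - w)^α - A^α)` for `0 < w < A`. Both are nonnegative by the subadditivity of
`x ↦ x^α` on `[0, ∞)`, so the gap grows as `|z|` moves away from `0`.
-/

open Set

lemma nonneg_of_hasDerivAt_of_apply_zero {g g' : ℝ → ℝ} {x : ℝ} (hx : 0 ≤ x)
    (hg : ∀ t, HasDerivAt g (g' t) t) (hg' : ∀ t ∈ Ioo 0 x, 0 ≤ g' t) (h0 : g 0 = 0) :
    0 ≤ g x := by
  have hmono : MonotoneOn g (Icc 0 x) :=
    monotoneOn_of_hasDerivWithinAt_nonneg (convex_Icc 0 x)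
      (fun t _ => (hg t).continuousAt.continuousWithinAt)
      (fun t _ => (hg t).hasDerivWithinAt) (by simpa only [interior_Icc] using hg')
  simpa only [h0] using hmono (left_mem_Icc.2 hx) (right_mem_Icc.2 hx) hx

section

variable {A α : ℝ}

lemma add_rpow_one_add_le {z : ℝ} (hα0 : 0 ≤ α) (hα1 : α ≤ 1) (hA : 0 ≤ A) (hz : 0 ≤ z) :
    (A + z) ^ (1 + α) ≤ A ^ (1 + α) + (1 + α) * A ^ α * z + z ^ (1 + α) := by
  have hp : (1 : ℝ) ≤ 1 + α := by linarith
  have hderiv (t : ℝ) : HasDerivAt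
      (fun t => A ^ (1 + α) + (1 + α) * A ^ α * t + t ^ (1 + α) - (A + t) ^ (1 + α))
      ((1 + α) * (A ^ α + t ^ α - (A + t) ^ α)) t := by
    have hlin := ((hasDerivAt_id t).const_mul ((1 + α) * A ^ α)).const_add (A ^ (1 + α))
    have hpow := Real.hasDerivAt_rpow_const (x := t) (Or.inr hp)
    have hshift := ((hasDerivAt_id t).const_add A).rpow_const (Or.inr hp)
    refine ((hlin.add hpow).sub hshift).congr_deriv ?_
    rw [add_sub_cancel_left, id]
    ring
  have hslope (t : ℝ) (ht : t ∈ Ioo 0 z) : 0 ≤ (1 + α) * (A ^ α + t ^ α - (A + t) ^ α) := by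
    have hsub := Real.rpow_add_le_add_rpow hA ht.1.le hα0 hα1
    exact mul_nonneg (by linarith) (by linarith)
  have hgap := nonneg_of_hasDerivAt_of_apply_zero hz hderiv hslope
    (by simp [Real.zero_rpow (by linarith : (1 + α) ≠ 0)])
  linarith

lemma sub_rpow_one_add_le {w : ℝ} (hα0 : 0 ≤ α) (hα1 : α ≤ 1) (hw : 0 ≤ w) (hwA : w ≤ A) :
    (A - w) ^ (1 + α) ≤ A ^ (1 + α) - (1 + α) * A ^ α * w + w ^ (1 + α) := by
  have hp : (1 : ℝ) ≤ 1 + α := by linarith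
  have hderiv (t : ℝ) : HasDerivAt
      (fun t => A ^ (1 + α) - (1 + α) * A ^ α * t + t ^ (1 + α) - (A - t) ^ (1 + α))
      ((1 + α) * (t ^ α + (A - t) ^ α - A ^ α)) t := by
    have hlin := ((hasDerivAt_id t).const_mul ((1 + α) * A ^ α)).const_sub (A ^ (1 + α))
    have hpow := Real.hasDerivAt_rpow_const (x := t) (Or.inr hp)
    have hshift := ((hasDerivAt_id t).const_sub A).rpow_const (Or.inr hp)
    refine ((hlin.add hpow).sub hshift).congr_deriv ?_
    rw [add_sub_cancel_left, id]
    ring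
  have hslope (t : ℝ) (ht : t ∈ Ioo 0 w) : 0 ≤ (1 + α) * (t ^ α + (A - t) ^ α - A ^ α) := by
    have hsub := Real.rpow_add_le_add_rpow ht.1.le (by linarith [ht.2] : 0 ≤ A - t) hα0 hα1
    rw [add_sub_cancel] at hsub
    exact mul_nonneg (by linarith) (by linarith)
  have hgap := nonneg_of_hasDerivAt_of_apply_zero hw hderiv hslope
    (by simp [Real.zero_rpow (by linarith : (1 + α) ≠ 0)])
  linarith

end

/-- For `A > 0`, `z > -A` and `α ∈ (0,1)`:
`(A + z)^{1+α} ≤ A^{1+α} + (1+α) A^α z + |z|^{1+α}`. -/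
theorem stmt3 (A z α : ℝ) (hA : 0 < A) (hz : -A < z) (hα : α ∈ Set.Ioo (0 : ℝ) 1) :
    (A + z) ^ (1 + α) ≤ A ^ (1 + α) + (1 + α) * A ^ α * z + |z| ^ (1 + α) := by
  rcases le_or_gt 0 z with hz0 | hz0
  · rw [abs_of_nonneg hz0]
    exact add_rpow_one_add_le hα.1.le hα.2.le hA.le hz0
  · rw [abs_of_neg hz0]
    simpa only [sub_neg_eq_add, mul_neg] using
      sub_rpow_one_add_le hα.1.le hα.2.le (neg_nonneg.2 hz0.le) (by linarith : -z ≤ A)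
end

section
/- Let X, X⁺ be ℝ^d-valued random vectors with the same marginal law, let φ be measurable with E‖φ(X)‖² < ∞, and let γ ∈ (0,1). If M := E[φ(X)φ(X)ᵀ] is positive definite, then the matrix Ā := M − γE[φ(X)φ(X⁺)ᵀ] satisfies vᵀĀv ≥ (1 − γ) vᵀMv > 0 for all nonzero v ∈ ℝ^d, and hence min_i Re(λ_i(Ā)) ≥ (1−γ) λ_min(M) > 0. -/
open Matrix MeasureTheory ProbabilityTheory

/-!
With `f = vᵀφ(X)` and `g = vᵀφ(X⁺)`, the quadratic forms are `vᵀMv = E[f²]` and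
`vᵀĀv = E[f²] - γ E[fg]`. Since `X` and `X⁺` have the same law, `E[g²] = E[f²]`, so
`E[fg] ≤ E[(f² + g²)/2] = E[f²]`, which gives `vᵀĀv ≥ (1 - γ) vᵀMv`. For a complex eigenvector
`w = a + i b` of the real matrix `Ā`, `Re (w* Ā w) = aᵀĀa + bᵀĀb`, so the bound on real quadratic
forms passes to the real parts of the eigenvalues.
-/

section Probability

variable {Ω : Type*} [MeasurableSpace Ω] {μ : Measure Ω}

theorem integral_mul_le_integral_sq_of_identDistrib {f g : Ω → ℝ} (h : IdentDistrib f g μ μ)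
    (hf : Integrable (fun ω => f ω ^ 2) μ) : ∫ ω, f ω * g ω ∂μ ≤ ∫ ω, f ω ^ 2 ∂μ := by
  have hsq : IdentDistrib (fun ω => f ω ^ 2) (fun ω => g ω ^ 2) μ μ :=
    h.comp (u := fun x : ℝ => x ^ 2) (by fun_prop)
  have hg : Integrable (fun ω => g ω ^ 2) μ := hsq.integrable_iff.1 hf
  by_cases hfg : Integrable (fun ω => f ω * g ω) μ
  · calc ∫ ω, f ω * g ω ∂μ ≤ ∫ ω, (f ω ^ 2 + g ω ^ 2) / 2 ∂μ :=
          integral_mono hfg ((hf.add hg).div_const 2) fun ω => by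
            nlinarith [sq_nonneg (f ω - g ω)]
      _ = ∫ ω, f ω ^ 2 ∂μ := by
          rw [integral_div, integral_add hf hg, ← hsq.integral_eq]
          ring
  · rw [integral_undef hfg]
    exact integral_nonneg fun ω => sq_nonneg _

variable {n : Type*} [Fintype n]

theorem Matrix.dotProduct_mul_dotProduct_eq_sum (u v x y : n → ℝ) :
    (u ⬝ᵥ x) * (v ⬝ᵥ y) = ∑ i, ∑ j, u i * v j * (x i * y j) := by
  simp only [dotProduct, Finset.sum_mul_sum]
  exact Finset.sum_congr rfl fun i _ => Finset.sum_congr rfl fun j _ => by ring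

variable {f g : Ω → n → ℝ}

theorem integrable_dotProduct_mul_dotProduct
    (hfg : ∀ i j, Integrable (fun ω => f ω i * g ω j) μ) (u v : n → ℝ) :
    Integrable (fun ω => (u ⬝ᵥ f ω) * (v ⬝ᵥ g ω)) μ := by
  simp only [dotProduct_mul_dotProduct_eq_sum]
  exact integrable_finsetSum _ fun i _ =>
    integrable_finsetSum _ fun j _ => (hfg i j).const_mul _

theorem dotProduct_mulVec_eq_integral (hfg : ∀ i j, Integrable (fun ω => f ω i * g ω j) μ)
    {A : Matrix n n ℝ} (hA : ∀ i j, A i j = ∫ ω, f ω i * g ω j ∂μ) (u v : n → ℝ) :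
    u ⬝ᵥ A *ᵥ v = ∫ ω, (u ⬝ᵥ f ω) * (v ⬝ᵥ g ω) ∂μ := by
  simp only [dotProduct_mul_dotProduct_eq_sum]
  rw [integral_finsetSum _ fun i _ =>
    integrable_finsetSum _ fun j _ => (hfg i j).const_mul _]
  simp only [dotProduct, mulVec, Finset.mul_sum]
  refine Finset.sum_congr rfl fun i _ => ?_
  rw [integral_finsetSum _ fun j _ => (hfg i j).const_mul _]
  refine Finset.sum_congr rfl fun j _ => ?_
  rw [integral_const_mul, hA]
  ring

end Probability

section RealMatrix

variable {n : Type*} [Fintype n]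

theorem Matrix.re_star_dotProduct_map_mulVec (A : Matrix n n ℝ) (w : n → ℂ) :
    (star w ⬝ᵥ A.map (algebraMap ℝ ℂ) *ᵥ w).re =
      (fun i => (w i).re) ⬝ᵥ A *ᵥ (fun i => (w i).re) +
        (fun i => (w i).im) ⬝ᵥ A *ᵥ (fun i => (w i).im) := by
  simp only [dotProduct, mulVec, Complex.re_sum, Finset.mul_sum, ← Finset.sum_add_distrib]
  refine Finset.sum_congr rfl fun i _ => Finset.sum_congr rfl fun j _ => ?_
  simp only [map_apply, Complex.coe_algebraMap, Pi.star_apply, Complex.star_def, Complex.mul_re,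
    Complex.mul_im, Complex.conj_re, Complex.conj_im, Complex.ofReal_re, Complex.ofReal_im]
  ring

theorem Matrix.re_star_dotProduct_smul (ν : ℂ) (w : n → ℂ) :
    (star w ⬝ᵥ ν • w).re =
      ν.re * ((fun i => (w i).re) ⬝ᵥ (fun i => (w i).re) +
        (fun i => (w i).im) ⬝ᵥ (fun i => (w i).im)) := by
  simp only [dotProduct, Complex.re_sum, Finset.mul_sum, ← Finset.sum_add_distrib]
  refine Finset.sum_congr rfl fun i _ => ?_
  simp only [Pi.smul_apply, smul_eq_mul, Pi.star_apply, Complex.star_def, Complex.mul_re,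
    Complex.mul_im, Complex.conj_re, Complex.conj_im]
  ring

open scoped ComplexOrder in
theorem Matrix.le_re_of_mem_spectrum_map [DecidableEq n] {A : Matrix n n ℝ} {c : ℝ}
    (hA : ∀ v, c * (v ⬝ᵥ v) ≤ v ⬝ᵥ A *ᵥ v) {ν : ℂ}
    (hν : ν ∈ spectrum ℂ (A.map (algebraMap ℝ ℂ))) : c ≤ ν.re := by
  rw [← spectrum_toLin', ← Module.End.hasEigenvalue_iff_mem_spectrum] at hν
  obtain ⟨w, hw⟩ := hν.exists_hasEigenvector
  set a : n → ℝ := fun i => (w i).re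
  set b : n → ℝ := fun i => (w i).im
  have hpos : 0 < a ⬝ᵥ a + b ⬝ᵥ b := by
    have hnorm := re_star_dotProduct_smul 1 w
    rw [one_smul, Complex.one_re, one_mul] at hnorm
    rw [← hnorm]
    exact (Complex.pos_iff.1 (dotProduct_star_self_pos_iff.2 hw.2)).1
  have hre : ν.re * (a ⬝ᵥ a + b ⬝ᵥ b) = a ⬝ᵥ A *ᵥ a + b ⬝ᵥ A *ᵥ b := by
    rw [← re_star_dotProduct_smul, ← re_star_dotProduct_map_mulVec, ← toLin'_apply,
      hw.apply_eq_smul]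
  nlinarith [hA a, hA b]

theorem Matrix.mul_dotProduct_self_le_of_forall_unit {A : Matrix n n ℝ} {c : ℝ}
    (h : ∀ v, v ⬝ᵥ v = 1 → c ≤ v ⬝ᵥ A *ᵥ v) (v : n → ℝ) : c * (v ⬝ᵥ v) ≤ v ⬝ᵥ A *ᵥ v := by
  rcases eq_or_ne v 0 with rfl | hv
  · simp
  have hpos : 0 < v ⬝ᵥ v := dotProduct_self_star_pos_iff.2 hv
  set s := √(v ⬝ᵥ v)
  have hs : 0 < s := Real.sqrt_pos.2 hpos
  have hs2 : s ^ 2 = v ⬝ᵥ v := Real.sq_sqrt hpos.le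
  have hunit := h (s⁻¹ • v) (by
    rw [dotProduct_smul, smul_dotProduct, ← hs2, smul_eq_mul, smul_eq_mul]
    field_simp)
  rw [mulVec_smul, dotProduct_smul, smul_dotProduct, smul_eq_mul, smul_eq_mul, ← mul_assoc,
    ← mul_inv, ← sq, hs2, inv_mul_eq_div] at hunit
  rwa [← le_div_iff₀ hpos]

end RealMatrix

theorem stmt9_general {d : ℕ} {Ω : Type*} [MeasurableSpace Ω] (μ : Measure Ω)
    (φX φXp : Ω → Fin d → ℝ) (hmX : Measurable φX) (hmXp : Measurable φXp)
    (hlaw : Measure.map φX μ = Measure.map φXp μ)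
    (hint : ∀ i j, Integrable (fun ω => φX ω i * φX ω j) μ)
    (hint' : ∀ i j, Integrable (fun ω => φX ω i * φXp ω j) μ)
    (γ : ℝ) (hγ : γ ∈ Set.Ioo (0 : ℝ) 1)
    (M Abar : Matrix (Fin d) (Fin d) ℝ)
    (hM : ∀ i j, M i j = ∫ ω, φX ω i * φX ω j ∂μ)
    (hAbar : ∀ i j, Abar i j = M i j - γ * ∫ ω, φX ω i * φXp ω j ∂μ)
    (hMpd : M.PosDef) :
    (∀ v : Fin d → ℝ, v ≠ 0 →
        (1 - γ) * (v ⬝ᵥ M.mulVec v) ≤ v ⬝ᵥ Abar.mulVec v ∧ 0 < v ⬝ᵥ M.mulVec v) ∧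
      ∀ c : ℝ, (∀ v : Fin d → ℝ, (∑ i, (v i) ^ 2) = 1 → c ≤ v ⬝ᵥ M.mulVec v) →
        ∀ ν ∈ spectrum ℂ (Abar.map (algebraMap ℝ ℂ)), (1 - γ) * c ≤ ν.re := by
  obtain ⟨hγ0, hγ1⟩ := hγ
  set C : Matrix (Fin d) (Fin d) ℝ := of fun i j => ∫ ω, φX ω i * φXp ω j ∂μ
  have hAbarC : Abar = M - γ • C := by
    ext i j
    simp [hAbar, C]
  have hident : IdentDistrib φX φXp μ μ := ⟨hmX.aemeasurable, hmXp.aemeasurable, hlaw⟩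
  have hquad (v : Fin d → ℝ) : (1 - γ) * (v ⬝ᵥ M *ᵥ v) ≤ v ⬝ᵥ Abar *ᵥ v := by
    have hMv : v ⬝ᵥ M *ᵥ v = ∫ ω, (v ⬝ᵥ φX ω) ^ 2 ∂μ := by
      simp only [dotProduct_mulVec_eq_integral hint hM, sq]
    have hCv : v ⬝ᵥ C *ᵥ v = ∫ ω, (v ⬝ᵥ φX ω) * (v ⬝ᵥ φXp ω) ∂μ :=
      dotProduct_mulVec_eq_integral hint' (fun _ _ => rfl) v v
    have hCM : v ⬝ᵥ C *ᵥ v ≤ v ⬝ᵥ M *ᵥ v := by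
      rw [hMv, hCv]
      refine integral_mul_le_integral_sq_of_identDistrib
        (hident.comp (u := fun x => v ⬝ᵥ x) (by fun_prop)) ?_
      simpa only [sq] using integrable_dotProduct_mul_dotProduct hint v v
    rw [hAbarC, sub_mulVec, smul_mulVec, dotProduct_sub, dotProduct_smul, smul_eq_mul]
    nlinarith
  refine ⟨fun v hv => ⟨hquad v, hMpd.dotProduct_mulVec_pos hv⟩, fun c hc ν hν => ?_⟩
  refine le_re_of_mem_spectrum_map (fun v => ?_) hν
  have hcM := mul_dotProduct_self_le_of_forall_unit
    (fun u hu => hc u (by simpa [dotProduct, sq] using hu)) v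
  nlinarith [hquad v]

/-- If `φ(X)` and `φ(X⁺)` have the same law with square-integrable components, and
`M = E[φ(X)φ(X)ᵀ]` is positive definite, then `Ā = M - γ E[φ(X)φ(X⁺)ᵀ]` satisfies
`vᵀĀv ≥ (1-γ) vᵀMv > 0` for every nonzero `v`, and every (complex) eigenvalue of `Ā`
has real part at least `(1-γ)·λ_min(M)`. -/
theorem stmt9 {d : ℕ} {Ω : Type*} [MeasurableSpace Ω] (μ : Measure Ω)
    [IsProbabilityMeasure μ]
    (φX φXp : Ω → Fin d → ℝ) (hmX : Measurable φX) (hmXp : Measurable φXp)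
    (hlaw : Measure.map φX μ = Measure.map φXp μ)
    (hL2 : Integrable (fun ω => ∑ i, (φX ω i) ^ 2) μ)
    (hint : ∀ i j, Integrable (fun ω => φX ω i * φX ω j) μ)
    (hint' : ∀ i j, Integrable (fun ω => φX ω i * φXp ω j) μ)
    (γ : ℝ) (hγ : γ ∈ Set.Ioo (0 : ℝ) 1)
    (M Abar : Matrix (Fin d) (Fin d) ℝ)
    (hM : ∀ i j, M i j = ∫ ω, φX ω i * φX ω j ∂μ)
    (hAbar : ∀ i j, Abar i j = M i j - γ * ∫ ω, φX ω i * φXp ω j ∂μ)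
    (hMpd : M.PosDef) :
    (∀ v : Fin d → ℝ, v ≠ 0 →
        (1 - γ) * (v ⬝ᵥ M.mulVec v) ≤ v ⬝ᵥ Abar.mulVec v ∧ 0 < v ⬝ᵥ M.mulVec v) ∧
      ∀ c : ℝ, (∀ v : Fin d → ℝ, (∑ i, (v i) ^ 2) = 1 → c ≤ v ⬝ᵥ M.mulVec v) →
        ∀ ν ∈ spectrum ℂ (Abar.map (algebraMap ℝ ℂ)), (1 - γ) * c ≤ ν.re :=
  stmt9_general μ φX φXp hmX hmXp hlaw hint hint' γ hγ M Abar hM hAbar hMpd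
end

section
/- For every dimension d ≥ 2 there exists a matrix Ā ∈ ℂ^{d×d} with min_i Re(λ_i(Ā)) ≥ 0 and min_i |λ_i(Ā)| ≥ 1 such that, with θ* = 0, initial vector θ_0 = e_d (the last standard basis vector), any step size η > 0, and deterministic iterates θ_{t+1} = (I − ηĀ)θ_t, the Polyak–Ruppert average θ̄_T = (1/T)∑_{t=0}^{T−1}θ_t satisfies ‖θ̄_T − θ*‖₂ ≥ 1/2 for all T ≥ 4. In particular one may take Ā = −iI_d − J_d where J_d is the nilpotent Jordan block. -/
/-!
The witness `Ā = -iI - J` is upper triangular with diagonal `-i`, so its only eigenvalue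
is `-i`. The iteration matrix is `I - ηĀ = zI + ηJ` with `z = 1 + iη`, and from `θ₀ = e_d`
the last two coordinates evolve as `y_{t+1} = z y_t`, `x_{t+1} = z x_t + η y_t`.
Since `η - i = -iz`, the combination `x_t - i y_t` telescopes:
`∑_{t ≤ T} (x_t - i y_t) = -i (T+1) z^T`. Hence the averages satisfy
`‖x̄‖ + ‖ȳ‖ ≥ |z|^T ≥ 1`, so one of them, and with it the Euclidean norm of the average,
is at least `1/2`.
-/

open Matrix Finset

def jordanShift (R : Type*) [Zero R] [One R] (d : ℕ) : Matrix (Fin d) (Fin d) R :=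
  Matrix.of fun i j => if (i : ℕ) + 1 = j then 1 else 0

section JordanShift

variable {R : Type*} {d : ℕ}

lemma jordanShift_mulVec_apply [NonAssocSemiring R] (v : Fin d → R) (i : Fin d) :
    (jordanShift R d *ᵥ v) i = if h : (i : ℕ) + 1 < d then v ⟨i + 1, h⟩ else 0 := by
  simp only [jordanShift, mulVec, dotProduct, of_apply, ite_mul, one_mul, zero_mul]
  split_ifs with h
  · simp_rw [show ∀ j : Fin d, ((i : ℕ) + 1 = j ↔ j = ⟨i + 1, h⟩) from
      fun j => by rw [Fin.ext_iff, eq_comm]]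
    simp
  · exact Finset.sum_eq_zero fun j _ => if_neg (by omega)

lemma jordanShift_mulVec_apply_of_add_one_eq [NonAssocSemiring R] (v : Fin d → R)
    {i j : Fin d} (h : (i : ℕ) + 1 = j) : (jordanShift R d *ᵥ v) i = v j := by
  rw [jordanShift_mulVec_apply, dif_pos (h ▸ j.isLt)]
  exact congrArg v (Fin.ext h)

lemma jordanShift_mulVec_apply_of_add_one_eq_self [NonAssocSemiring R] (v : Fin d → R)
    {i : Fin d} (h : (i : ℕ) + 1 = d) : (jordanShift R d *ᵥ v) i = 0 := by
  rw [jordanShift_mulVec_apply, dif_neg (by omega)]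

lemma isUpperTriangular_smul_one_sub_jordanShift [Ring R] (c : R) :
    (c • 1 - jordanShift R d).IsUpperTriangular := by
  intro i j hji
  have hji : (j : ℕ) < i := hji
  have hij : i ≠ j := fun h => by simp [h] at hji
  have : (i : ℕ) + 1 ≠ j := by omega
  simp [jordanShift, one_apply, hij, this]

lemma smul_one_sub_jordanShift_apply_self [Ring R] (c : R) (i : Fin d) :
    (c • 1 - jordanShift R d) i i = c := by
  simp [jordanShift]

end JordanShift

theorem spectrum_subset_range_diag_of_isUpperTriangular {K n : Type*} [Field K] [Fintype n]
    [DecidableEq n] [LinearOrder n] {A : Matrix n n K} (hA : A.IsUpperTriangular) :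
    spectrum K A ⊆ Set.range fun i => A i i := by
  intro μ hμ
  rw [mem_spectrum_iff_isRoot_charpoly, charpoly_of_isUpperTriangular A hA, Polynomial.IsRoot,
    Polynomial.eval_prod, Finset.prod_eq_zero_iff] at hμ
  obtain ⟨i, -, hi⟩ := hμ
  exact ⟨i, by simpa [sub_eq_zero, eq_comm] using hi⟩

lemma eq_of_mem_spectrum_smul_one_sub_jordanShift {K : Type*} [Field K] {d : ℕ} {c μ : K}
    (hμ : μ ∈ spectrum K (c • 1 - jordanShift K d)) : μ = c := by
  obtain ⟨i, rfl⟩ := spectrum_subset_range_diag_of_isUpperTriangular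
    (isUpperTriangular_smul_one_sub_jordanShift c) hμ
  exact smul_one_sub_jordanShift_apply_self c i

lemma one_sub_smul_mulVec_apply {R n : Type*} [CommRing R] [Fintype n] [DecidableEq n]
    (η c : R) (N : Matrix n n R) (v : n → R) (i : n) :
    ((1 - η • (c • 1 - N)) *ᵥ v) i = (1 - η * c) * v i + η * (N *ᵥ v) i := by
  simp only [sub_mulVec, smul_mulVec, one_mulVec, Pi.sub_apply, Pi.smul_apply, smul_eq_mul]
  ring

lemma sum_range_succ_sub_I_mul {η : ℂ} {x y : ℕ → ℂ} (hx0 : x 0 = 0) (hy0 : y 0 = 1)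
    (hx : ∀ t, x (t + 1) = (1 + η * Complex.I) * x t + η * y t)
    (hy : ∀ t, y (t + 1) = (1 + η * Complex.I) * y t) (T : ℕ) :
    ∑ t ∈ range (T + 1), (x t - Complex.I * y t) =
      -Complex.I * (T + 1) * (1 + η * Complex.I) ^ T := by
  set z := 1 + η * Complex.I
  have hy_eq (t : ℕ) : y t = z ^ t := by
    induction t with
    | zero => simpa using hy0
    | succ t ih => rw [hy, ih, pow_succ']
  have hx_eq (t : ℕ) : x (t + 1) = η * (t + 1) * z ^ t := by
    induction t with
    | zero => simp [hx, hx0, hy0]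
    | succ t ih => rw [hx, ih, hy_eq]; push_cast; ring
  induction T with
  | zero => simp [hx0, hy0]
  | succ T ih =>
    rw [sum_range_succ, ih, hx_eq, hy_eq]
    push_cast
    linear_combination (η * (T + 1) * z ^ T) * Complex.I_sq

lemma one_le_norm_one_add_mul_I (η : ℝ) : 1 ≤ ‖1 + η * Complex.I‖ := by
  simpa using Complex.abs_re_le_norm (1 + η * Complex.I)

lemma one_le_norm_mean_add_norm_mean {η : ℝ} {x y : ℕ → ℂ} (hx0 : x 0 = 0) (hy0 : y 0 = 1)
    (hx : ∀ t, x (t + 1) = (1 + η * Complex.I) * x t + η * y t)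
    (hy : ∀ t, y (t + 1) = (1 + η * Complex.I) * y t) (T : ℕ) :
    1 ≤ ‖((T + 1 : ℕ) : ℂ)⁻¹ * ∑ t ∈ range (T + 1), x t‖ +
      ‖((T + 1 : ℕ) : ℂ)⁻¹ * ∑ t ∈ range (T + 1), y t‖ := by
  set a := ((T + 1 : ℕ) : ℂ)⁻¹ * ∑ t ∈ range (T + 1), x t
  set b := ((T + 1 : ℕ) : ℂ)⁻¹ * ∑ t ∈ range (T + 1), y t
  have hmean : a - Complex.I * b = -Complex.I * (1 + η * Complex.I) ^ T := by
    rw [mul_left_comm, ← mul_sub, Finset.mul_sum, ← Finset.sum_sub_distrib,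
      sum_range_succ_sub_I_mul hx0 hy0 hx hy]
    field_simp
    push_cast
    ring
  calc 1 ≤ ‖a - Complex.I * b‖ := by
        rw [hmean, norm_mul, norm_neg, Complex.norm_I, one_mul, norm_pow]
        exact one_le_pow₀ (one_le_norm_one_add_mul_I η)
    _ ≤ ‖a‖ + ‖Complex.I * b‖ := norm_sub_le _ _
    _ = ‖a‖ + ‖b‖ := by rw [norm_mul Complex.I, Complex.norm_I, one_mul]

lemma norm_apply_le_sqrt_sum_sq {ι E : Type*} [Fintype ι] [SeminormedAddCommGroup E]
    (v : ι → E) (i : ι) : ‖v i‖ ≤ √(∑ j, ‖v j‖ ^ 2) := by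
  simpa using Real.abs_le_sqrt (Finset.single_le_sum (f := fun j => ‖v j‖ ^ 2)
    (fun j _ => by positivity) (mem_univ i))

/-- For every `d ≥ 2` there is a matrix `Ā ∈ ℂ^{d×d}` whose eigenvalues all have
nonnegative real part and modulus at least `1`, such that for `θ* = 0`, `θ_0 = e_d`,
any step size `η > 0` and the deterministic iterates `θ_{t+1} = (I - ηĀ)θ_t`, the
Polyak–Ruppert average stays at Euclidean distance at least `1/2` from `θ*` for all
`T ≥ 4`. -/
theorem stmt10 (d : ℕ) (hd : 2 ≤ d) :
    ∃ Abar : Matrix (Fin d) (Fin d) ℂ,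
      (∀ μ ∈ spectrum ℂ Abar, 0 ≤ μ.re ∧ 1 ≤ ‖μ‖) ∧
      ∀ η : ℝ, 0 < η → ∀ θ : ℕ → Fin d → ℂ,
        θ 0 = Pi.single (⟨d - 1, by omega⟩ : Fin d) 1 →
        (∀ t, θ (t + 1) =
          ((1 : Matrix (Fin d) (Fin d) ℂ) - (η : ℂ) • Abar).mulVec (θ t)) →
        ∀ T : ℕ, 4 ≤ T →
          (1 : ℝ) / 2 ≤ Real.sqrt (∑ j,
            ‖((T : ℂ)⁻¹ • ∑ t ∈ Finset.range T, θ t) j‖ ^ 2) := by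
  refine ⟨-Complex.I • 1 - jordanShift ℂ d, fun μ hμ => ?_, fun η _ θ hθ0 hθ T hT => ?_⟩
  · obtain rfl := eq_of_mem_spectrum_smul_one_sub_jordanShift hμ
    simp
  obtain ⟨T, rfl⟩ : ∃ T', T = T' + 1 := ⟨T - 1, by omega⟩
  set last : Fin d := ⟨d - 1, by omega⟩
  set prev : Fin d := ⟨d - 2, by omega⟩
  have hstep (t : ℕ) (i : Fin d) :
      θ (t + 1) i = (1 + η * Complex.I) * θ t i + η * (jordanShift ℂ d *ᵥ θ t) i := by
    rw [hθ, one_sub_smul_mulVec_apply]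
    ring
  have hprev (t : ℕ) : θ (t + 1) prev = (1 + η * Complex.I) * θ t prev + η * θ t last := by
    rw [hstep, jordanShift_mulVec_apply_of_add_one_eq (i := prev) (j := last) _
      (show d - 2 + 1 = d - 1 by omega)]
  have hlast (t : ℕ) : θ (t + 1) last = (1 + η * Complex.I) * θ t last := by
    rw [hstep, jordanShift_mulVec_apply_of_add_one_eq_self (i := last) _
      (show d - 1 + 1 = d by omega), mul_zero, add_zero]
  have hmeans := one_le_norm_mean_add_norm_mean
    (x := fun t => θ t prev) (y := fun t => θ t last)
    (by simp [hθ0, last, prev, Pi.single_apply, Fin.ext_iff]; omega) (by simp [hθ0, last])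
    hprev hlast T
  set avg : Fin d → ℂ := ((T + 1 : ℕ) : ℂ)⁻¹ • ∑ t ∈ range (T + 1), θ t
  have havg (j : Fin d) : avg j = ((T + 1 : ℕ) : ℂ)⁻¹ * ∑ t ∈ range (T + 1), θ t j := by
    simp [avg, Finset.sum_apply]
  rw [← havg, ← havg] at hmeans
  linarith [norm_apply_le_sqrt_sum_sq avg prev, norm_apply_le_sqrt_sum_sq avg last]
end
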